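/- For every H ∈ (0,1) there exists a constant C > 0 depending only on H such that for all positive integers n and k and every real u with n+k ≤ u ≤ n+k+1, one has ∫_{n/2}^{n} (u/s)^{2H−1} (u−s)^{2H−3} ds ≤ C (1 + k/n)^{2H−1} k^{2H−2}. -/

import Mathlib

/-!
On `(n/2, n)` the ratio `u/s` lies between `ρ = 1 + k/n` and `4ρ`, so
`(u/s)^(2H-1) ≤ 4 ρ^(2H-1)` whatever the sign of `2H - 1`. The remaining factor
`(u - s)^(2H-3)` integrates explicitly, and since `2H - 3 < -1` its integral is dominated by
the contribution of the endpoint nearest to `u`, which is at distance at least `k`.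
-/

open MeasureTheory Set

namespace Real

lemma rpow_le_mul_rpow_of_le_of_le_mul {a c ρ x : ℝ} (hρ : 0 < ρ) (hc : 1 ≤ c) (ha : a ≤ 1)
    (hlo : ρ ≤ x) (hhi : x ≤ c * ρ) : x ^ a ≤ c * ρ ^ a := by
  have hρa : 0 < ρ ^ a := rpow_pos_of_pos hρ a
  rcases le_or_gt 0 a with ha0 | ha0
  · calc x ^ a ≤ (c * ρ) ^ a := rpow_le_rpow (hρ.le.trans hlo) hhi ha0
      _ = c ^ a * ρ ^ a := mul_rpow (by linarith) hρ.le
      _ ≤ c ^ (1 : ℝ) * ρ ^ a := by gcongr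
      _ = c * ρ ^ a := by rw [rpow_one]
  · calc x ^ a ≤ ρ ^ a := rpow_le_rpow_of_nonpos hρ hlo ha0.le
      _ ≤ c * ρ ^ a := le_mul_of_one_le_left hρa.le hc

end Real

lemma div_mem_Icc_one_add_div {n k u s : ℝ} (hn : 0 < n) (hk : 1 ≤ k) (hu : n + k ≤ u)
    (hu' : u ≤ n + k + 1) (hs : s ∈ Ioc (n / 2) n) :
    u / s ∈ Icc (1 + k / n) (4 * (1 + k / n)) := by
  obtain ⟨hs₁, hs₂⟩ := hs
  have hs₀ : 0 < s := by linarith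
  have hρ : 1 + k / n = (n + k) / n := by field_simp
  rw [hρ]
  constructor
  · calc (n + k) / n ≤ (n + k) / s := by gcongr
      _ ≤ u / s := by gcongr
  · rw [div_le_iff₀ hs₀, ← mul_div_assoc, div_mul_eq_mul_div, le_div_iff₀ hn]
    nlinarith

lemma setIntegral_Ioo_sub_rpow {p a b u : ℝ} (hp : p ≠ -1) (hab : a ≤ b) (hbu : b < u) :
    ∫ s in Ioo a b, (u - s) ^ p = ((u - a) ^ (p + 1) - (u - b) ^ (p + 1)) / (p + 1) := by
  have hzero : (0 : ℝ) ∉ uIcc (u - b) (u - a) := by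
    rw [uIcc_of_le (by linarith)]
    exact fun h => by linarith [h.1]
  rw [← integral_Ioc_eq_integral_Ioo, ← intervalIntegral.integral_of_le hab,
    intervalIntegral.integral_comp_sub_left (fun t => t ^ p),
    integral_rpow (Or.inr ⟨hp, hzero⟩)]

lemma setIntegral_Ioo_sub_rpow_le {p a b u : ℝ} (hp : p < -1) (hab : a ≤ b) (hbu : b < u) :
    ∫ s in Ioo a b, (u - s) ^ p ≤ (u - b) ^ (p + 1) / -(p + 1) := by
  rw [setIntegral_Ioo_sub_rpow hp.ne hab hbu, ← neg_div_neg_eq, neg_sub]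
  gcongr
  · linarith
  · exact sub_le_self _ (Real.rpow_nonneg (by linarith) _)

lemma integrableOn_sub_rpow_Ioo {p a b u : ℝ} (hbu : b < u) :
    IntegrableOn (fun s => (u - s) ^ p) (Ioo a b) := by
  refine (ContinuousOn.integrableOn_Icc ?_).mono_set Ioo_subset_Icc_self
  exact ContinuousOn.rpow_const (by fun_prop) fun s hs => Or.inl (by linarith [hs.2])

/-- Bound on the term `J₂`. -/
theorem term_J2_bound (H : ℝ) (hH : H ∈ Set.Ioo (0:ℝ) 1) :
    ∃ C : ℝ, 0 < C ∧
      ∀ (n k : ℕ), 0 < n → 0 < k →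
        ∀ u : ℝ, (n + k : ℝ) ≤ u → u ≤ (n + k : ℝ) + 1 →
          (∫ s in Set.Ioo ((n:ℝ)/2) (n:ℝ), (u / s) ^ (2*H - 1) * (u - s) ^ (2*H - 3))
            ≤ C * (1 + (k:ℝ) / (n:ℝ)) ^ (2*H - 1) * (k:ℝ) ^ (2*H - 2) := by
  obtain ⟨hH₀, hH₁⟩ := hH
  refine ⟨4 / (2 - 2 * H), div_pos four_pos (by linarith), fun n k hn hk u hu hu' => ?_⟩
  have hn₀ : (0 : ℝ) < n := Nat.cast_pos.mpr hn
  have hk₁ : (1 : ℝ) ≤ k := Nat.one_le_cast.mpr hk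
  set ρ := 1 + (k : ℝ) / n
  have hρ : 0 < ρ := by positivity
  have hratio : ∀ s ∈ Ioo ((n : ℝ) / 2) n, (u / s) ^ (2 * H - 1) ≤ 4 * ρ ^ (2 * H - 1) :=
    fun s hs =>
      have h := div_mem_Icc_one_add_div hn₀ hk₁ hu hu' (Ioo_subset_Ioc_self hs)
      Real.rpow_le_mul_rpow_of_le_of_le_mul hρ (by norm_num) (by linarith) h.1 h.2
  calc (∫ s in Ioo ((n : ℝ) / 2) n, (u / s) ^ (2 * H - 1) * (u - s) ^ (2 * H - 3))
      ≤ ∫ s in Ioo ((n : ℝ) / 2) n, 4 * ρ ^ (2 * H - 1) * (u - s) ^ (2 * H - 3) := by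
        refine integral_mono_of_nonneg (ae_restrict_of_forall_mem measurableSet_Ioo fun s hs => ?_)
          ((integrableOn_sub_rpow_Ioo (by linarith)).const_mul _)
          (ae_restrict_of_forall_mem measurableSet_Ioo fun s hs => ?_)
        · have : 0 < u / s := div_pos (by linarith) (by linarith [hs.1])
          have : 0 < u - s := by linarith [hs.2]
          positivity
        · exact mul_le_mul_of_nonneg_right (hratio s hs) (Real.rpow_nonneg (by linarith [hs.2]) _)
    _ = 4 * ρ ^ (2 * H - 1) * ∫ s in Ioo ((n : ℝ) / 2) n, (u - s) ^ (2 * H - 3) :=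
        integral_const_mul _ _
    _ ≤ 4 * ρ ^ (2 * H - 1) * ((u - n) ^ (2 * H - 2) / (2 - 2 * H)) := by
        have h := setIntegral_Ioo_sub_rpow_le (p := 2 * H - 3) (a := (n : ℝ) / 2) (b := n)
          (u := u) (by linarith) (by linarith) (by linarith)
        rw [show 2 * H - 3 + 1 = 2 * H - 2 by ring, neg_sub] at h
        gcongr
    _ ≤ 4 * ρ ^ (2 * H - 1) * ((k : ℝ) ^ (2 * H - 2) / (2 - 2 * H)) := by
        gcongr ?_ * (?_ / _)
        · linarith
        · exact Real.rpow_le_rpow_of_nonpos (by linarith) (by linarith) (by linarith)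
    _ = 4 / (2 - 2 * H) * ρ ^ (2 * H - 1) * (k : ℝ) ^ (2 * H - 2) := by ring
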